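/- Let d ≥ 1 and N ≥ 2 be integers, set h = 1/(2(N−1)) and grid coordinates x_{j,i} = (i−1)/(N−1) for i = 1, …, N in each dimension j = 1, …, d, and let φ_t denote the ReLU hat function of half-width h centered at t. Let b ∈ [d−1, d), and for x = (x₁, …, x_d) ∈ ℝ^d define I₁(x) = Σ_{i : x_{1,i} ≥ 1/2} φ_{x_{1,i}}(x₁) + Σ_{j=2}^{d} Σ_{i=1}^{N} φ_{x_{j,i}}(x_j) − b, I₂(x) = Σ_{i : x_{1,i} < 1/2} φ_{x_{1,i}}(x₁) + Σ_{j=2}^{d} Σ_{i=1}^{N} φ_{x_{j,i}}(x_j) − b, and f₂(x) = ReLU(I₁(x))/(d − b) − ReLU(I₂(x))/(d − b). Then: (i) at every grid point p = (x_{1,i₁}, …, x_{d,i_d}), f₂(p) = 1 if x_{1,i₁} ≥ 1/2 and f₂(p) = −1 if x_{1,i₁} < 1/2; and (ii) f₂(x) = 0 for every x ∈ ℝ^d whose sup-norm distance to the grid {(x_{1,i₁}, …, x_{d,i_d})} is at least (d − b)·h. -/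
import Mathlib


noncomputable def relu (x : ℝ) : ℝ := max x 0

/-- The one-dimensional ReLU hat function of half-width `h` centered at `t`. -/
noncomputable def hat (h t x : ℝ) : ℝ :=
  (1 / h) * relu (x - t + h) - (2 / h) * relu (x - t) + (1 / h) * relu (x - t - h)

lemma relu_of_nonneg {x : ℝ} (hx : 0 ≤ x) : relu x = x := max_eq_left hx
lemma relu_of_nonpos {x : ℝ} (hx : x ≤ 0) : relu x = 0 := max_eq_right hx

lemma hat_eq {h : ℝ} (hh : 0 < h) (t x : ℝ) :
    hat h t x = max 0 (1 - |x - t| / h) := by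
  unfold hat relu
  rcases le_total (x - t) 0 with h1 | h1
  · rw [abs_of_nonpos h1, max_eq_right h1, max_eq_right (by linarith : x - t - h ≤ 0)]
    rcases le_total (x - t + h) 0 with h2 | h2
    · rw [max_eq_right h2, max_eq_left]
      · ring
      · have h3 : (1:ℝ) ≤ -(x - t) / h := (one_le_div hh).2 (by linarith)
        linarith
    · rw [max_eq_left h2, max_eq_right]
      · field_simp; ring
      · have h3 : -(x - t) / h ≤ 1 := (div_le_one hh).2 (by linarith)
        linarith
  · rw [abs_of_nonneg h1, max_eq_left h1,
      max_eq_left (by linarith : (0:ℝ) ≤ x - t + h)]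
    rcases le_total (x - t - h) 0 with h2 | h2
    · rw [max_eq_right h2, max_eq_right]
      · field_simp; ring
      · have h3 : (x - t) / h ≤ 1 := (div_le_one hh).2 (by linarith)
        linarith
    · rw [max_eq_left h2, max_eq_left]
      · field_simp; ring
      · have h3 : (1:ℝ) ≤ (x - t) / h := (one_le_div hh).2 (by linarith)
        linarith

lemma hat_nonneg {h : ℝ} (hh : 0 < h) (t x : ℝ) : 0 ≤ hat h t x := by
  rw [hat_eq hh]; exact le_max_left _ _

lemma hat_self {h : ℝ} (hh : 0 < h) (t : ℝ) : hat h t t = 1 := by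
  rw [hat_eq hh]; simp

lemma hat_eq_zero {h : ℝ} (hh : 0 < h) {t x : ℝ} (hdist : h ≤ |x - t|) : hat h t x = 0 := by
  rw [hat_eq hh]
  have : (1:ℝ) ≤ |x - t| / h := (one_le_div hh).2 hdist
  exact max_eq_left (by linarith)

section Grid

variable {N : ℕ} (hN : 2 ≤ N) {h : ℝ} (hh : h = 1 / (2 * ((N : ℝ) - 1)))
  {xg : ℕ → ℝ} (hxg : ∀ i, xg i = ((i : ℝ) - 1) / ((N : ℝ) - 1))

include hN hh

lemma hN1 : (1:ℝ) ≤ (N : ℝ) - 1 := by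
  have : (2:ℝ) ≤ (N:ℝ) := by exact_mod_cast hN
  linarith

lemma hhpos : 0 < h := by
  rw [hh]
  have := hN1 hN hh
  positivity

include hxg

lemma grid_sep {i m : ℕ} (him : i ≠ m) : 2 * h ≤ |xg i - xg m| := by
  have hN1 := hN1 hN hh
  have key : (1:ℝ) ≤ |(i:ℝ) - (m:ℝ)| := by
    have h0 : (i:ℤ) - (m:ℤ) ≠ 0 := sub_ne_zero.2 (by exact_mod_cast him)
    have h1 : (1:ℤ) ≤ |(i:ℤ) - (m:ℤ)| := Int.one_le_abs h0
    have h2 : ((1:ℤ):ℝ) ≤ (|(i:ℤ) - (m:ℤ)| : ℤ) := by exact_mod_cast h1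
    push_cast at h2
    exact_mod_cast h2
  have hx : xg i - xg m = ((i:ℝ) - (m:ℝ)) / ((N:ℝ) - 1) := by
    rw [hxg, hxg]; ring
  have hNpos : (0:ℝ) < (N:ℝ) - 1 := by linarith
  rw [hx, abs_div, abs_of_pos hNpos, hh]
  have e : 2 * (1 / (2 * ((N:ℝ) - 1))) = 1 / ((N:ℝ) - 1) := by field_simp
  rw [e]
  gcongr

lemma sum_single {y : ℝ} {k : ℕ} (hk : k ∈ Finset.Icc 1 N)
    (hz : ∀ i ∈ Finset.Icc 1 N, i ≠ k → h ≤ |y - xg i|) :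
    ∑ i ∈ Finset.Icc 1 N, hat h (xg i) y = hat h (xg k) y :=
  Finset.sum_eq_single_of_mem k hk
    (fun i hi hik => hat_eq_zero (hhpos hN hh) (hz i hi hik))

lemma sum_at_grid {m : ℕ} (hm : m ∈ Finset.Icc 1 N) :
    ∑ i ∈ Finset.Icc 1 N, hat h (xg i) (xg m) = 1 := by
  have hp := hhpos hN hh
  rw [sum_single hN hh hxg hm (fun i _ him => ?_), hat_self hp]
  have := grid_sep hN hh hxg (show i ≠ m from him)
  rw [abs_sub_comm] at this
  linarith

lemma sum_filter_grid (P : ℕ → Prop) [DecidablePred P] {m : ℕ} (hm : m ∈ Finset.Icc 1 N) :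
    ∑ i ∈ (Finset.Icc 1 N).filter P, hat h (xg i) (xg m)
      = if P m then 1 else 0 := by
  have hp := hhpos hN hh
  have hz : ∀ i, i ≠ m → hat h (xg i) (xg m) = 0 := by
    intro i him
    refine hat_eq_zero hp ?_
    have := grid_sep hN hh hxg him
    rw [abs_sub_comm] at this
    linarith
  by_cases hPm : P m
  · rw [if_pos hPm,
      Finset.sum_eq_single_of_mem m (Finset.mem_filter.2 ⟨hm, hPm⟩)
        (fun i _ him => hz i him),
      hat_self hp]
  · rw [if_neg hPm]
    refine Finset.sum_eq_zero fun i hi => ?_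
    exact hz i (fun e => hPm (e ▸ (Finset.mem_filter.1 hi).2))

lemma nearest (y : ℝ) : ∃ k ∈ Finset.Icc 1 N,
    (∑ i ∈ Finset.Icc 1 N, hat h (xg i) y) ≤ max 0 (1 - |y - xg k| / h) := by
  have hp := hhpos hN hh
  have hN1 := hN1 hN hh
  have hNpos : (0:ℝ) < (N:ℝ) - 1 := by linarith
  have h2h : 2 * h = 1 / ((N:ℝ) - 1) := by rw [hh]; field_simp
  have main : ∃ k ∈ Finset.Icc 1 N, ∀ i ∈ Finset.Icc 1 N, i ≠ k → h ≤ |y - xg i| := by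
    rcases le_total y 0 with hy0 | hy0
    · refine ⟨1, Finset.mem_Icc.2 ⟨le_refl 1, by omega⟩, fun i hi hik => ?_⟩
      obtain ⟨hi1, hiN⟩ := Finset.mem_Icc.1 hi
      have hi2 : 2 ≤ i := by omega
      have hi2' : (2:ℝ) ≤ (i:ℝ) := by exact_mod_cast hi2
      have hxgi : 2 * h ≤ xg i := by
        rw [hxg, h2h, div_le_div_iff₀ hNpos hNpos]
        nlinarith
      rw [abs_of_nonpos (by linarith)]
      linarith
    rcases le_total 1 y with hy1 | hy1
    · refine ⟨N, Finset.mem_Icc.2 ⟨by omega, le_refl N⟩, fun i hi hik => ?_⟩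
      obtain ⟨hi1, hiN⟩ := Finset.mem_Icc.1 hi
      have hi2 : i + 1 ≤ N := by omega
      have hi2' : (i:ℝ) + 1 ≤ (N:ℝ) := by exact_mod_cast hi2
      have hxgi : xg i ≤ 1 - 2 * h := by
        rw [hxg, h2h]
        have e : 1 - 1 / ((N:ℝ) - 1) = ((N:ℝ) - 2) / ((N:ℝ) - 1) := by
          field_simp
          ring
        rw [e, div_le_div_iff₀ hNpos hNpos]
        nlinarith
      rw [abs_of_nonneg (by linarith)]
      linarith
    · set a : ℝ := y * ((N:ℝ) - 1) with ha
      set m : ℤ := round a with hm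
      have hr : |a - (m:ℝ)| ≤ 1 / 2 := abs_sub_round a
      have hr1 := abs_le.1 hr
      have ha0 : 0 ≤ a := by positivity
      have haN : a ≤ (N:ℝ) - 1 := by nlinarith
      have hm0 : 0 ≤ m := by
        have : (-1:ℝ) < (m:ℝ) := by linarith
        have : (-1:ℤ) < m := by exact_mod_cast this
        omega
      have hmN' : m + 1 ≤ (N:ℤ) := by
        have h1 : (m:ℝ) < (N:ℝ) := by linarith
        have h2 : m < (N:ℤ) := by exact_mod_cast h1
        omega
      refine ⟨m.toNat + 1, Finset.mem_Icc.2 ⟨by omega, by omega⟩, fun i hi hik => ?_⟩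
      have htn : (m.toNat : ℤ) = m := Int.toNat_of_nonneg hm0
      have hcast : ((m.toNat + 1 : ℕ) : ℝ) = (m:ℝ) + 1 := by
        have : ((m.toNat : ℤ) : ℝ) = (m : ℝ) := by rw [htn]
        push_cast at this ⊢
        linarith
      have hxgk : xg (m.toNat + 1) = (m:ℝ) / ((N:ℝ) - 1) := by
        rw [hxg, hcast]; ring_nf
      have hclose : |y - xg (m.toNat + 1)| ≤ h := by
        rw [hxgk]
        have : y - (m:ℝ) / ((N:ℝ) - 1) = (a - (m:ℝ)) / ((N:ℝ) - 1) := by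
          rw [ha]; field_simp
        rw [this, abs_div, abs_of_pos hNpos, hh, div_le_div_iff₀ hNpos (by linarith)]
        nlinarith
      have hsep := grid_sep hN hh hxg (show i ≠ m.toNat + 1 from hik)
      have htri := abs_sub_le (xg i) y (xg (m.toNat + 1))
      rw [abs_sub_comm]
      linarith
  obtain ⟨k, hk, hz⟩ := main
  exact ⟨k, hk, le_of_eq (by rw [sum_single hN hh hxg hk hz, hat_eq hp])⟩

end Grid

/-- d-dimensional binary classification network on the uniform `N^d`
grid: zero training loss yet output 0 away from the grid. -/
theorem stmt_9 (d N : ℕ) (hd : 0 < d) (hN : 2 ≤ N)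
    (h : ℝ) (hh : h = 1 / (2 * ((N : ℝ) - 1)))
    (xg : ℕ → ℝ) (hxg : ∀ i, xg i = ((i : ℝ) - 1) / ((N : ℝ) - 1))
    (b : ℝ) (hb : (d : ℝ) - 1 ≤ b ∧ b < (d : ℝ))
    (I₁ I₂ f₂ : (Fin d → ℝ) → ℝ)
    (hI₁ : ∀ x : Fin d → ℝ, I₁ x =
      (∑ i ∈ (Finset.Icc 1 N).filter (fun i => (1 : ℝ) / 2 ≤ xg i),
        hat h (xg i) (x ⟨0, hd⟩))
      + (∑ j ∈ Finset.univ.filter (fun j : Fin d => j ≠ ⟨0, hd⟩),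
          ∑ i ∈ Finset.Icc 1 N, hat h (xg i) (x j)) - b)
    (hI₂ : ∀ x : Fin d → ℝ, I₂ x =
      (∑ i ∈ (Finset.Icc 1 N).filter (fun i => xg i < (1 : ℝ) / 2),
        hat h (xg i) (x ⟨0, hd⟩))
      + (∑ j ∈ Finset.univ.filter (fun j : Fin d => j ≠ ⟨0, hd⟩),
          ∑ i ∈ Finset.Icc 1 N, hat h (xg i) (x j)) - b)
    (hf : ∀ x, f₂ x = relu (I₁ x) / ((d : ℝ) - b) - relu (I₂ x) / ((d : ℝ) - b)) :
    (∀ ι : Fin d → ℕ, (∀ j, ι j ∈ Finset.Icc 1 N) →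
      ((1 : ℝ) / 2 ≤ xg (ι ⟨0, hd⟩) → f₂ (fun j => xg (ι j)) = 1) ∧
      (xg (ι ⟨0, hd⟩) < (1 : ℝ) / 2 → f₂ (fun j => xg (ι j)) = -1)) ∧
    (∀ x : Fin d → ℝ,
      (∀ ι : Fin d → ℕ, (∀ j, ι j ∈ Finset.Icc 1 N) →
        ∃ j : Fin d, ((d : ℝ) - b) * h ≤ |x j - xg (ι j)|) →
      f₂ x = 0) := by
  have hp : 0 < h := hhpos hN hh
  have hdb : (0:ℝ) < (d:ℝ) - b := by linarith [hb.2]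
  have hd1 : ((d - 1 : ℕ) : ℝ) = (d:ℝ) - 1 := by
    rw [Nat.cast_sub hd, Nat.cast_one]
  have hcardR : ((Finset.univ.filter (fun j : Fin d => j ≠ (⟨0, hd⟩ : Fin d))).card : ℝ)
      = (d:ℝ) - 1 := by
    rw [Finset.filter_ne', Finset.card_erase_of_mem (Finset.mem_univ _),
      Finset.card_univ, Fintype.card_fin, hd1]
  constructor
  · -- part (i): values at grid points
    intro ι hι
    have hsum2 : ∑ j ∈ Finset.univ.filter (fun j : Fin d => j ≠ (⟨0, hd⟩ : Fin d)),
        ∑ i ∈ Finset.Icc 1 N, hat h (xg i) (xg (ι j)) = (d:ℝ) - 1 := by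
      rw [Finset.sum_congr rfl (fun j _ => sum_at_grid hN hh hxg (hι j)),
        Finset.sum_const, nsmul_eq_mul, mul_one, hcardR]
    have e1 := sum_filter_grid hN hh hxg (fun i => (1:ℝ)/2 ≤ xg i) (hι ⟨0, hd⟩)
    have e2 := sum_filter_grid hN hh hxg (fun i => xg i < (1:ℝ)/2) (hι ⟨0, hd⟩)
    constructor
    · intro hge
      have hI1v : I₁ (fun j => xg (ι j)) = (d:ℝ) - b := by
        simp only [hI₁]
        rw [e1, if_pos hge, hsum2]
        ring
      have hI2v : I₂ (fun j => xg (ι j)) = (d:ℝ) - 1 - b := by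
        simp only [hI₂]
        rw [e2, if_neg (not_lt.2 hge), hsum2]
        ring
      rw [hf, hI1v, hI2v, relu_of_nonneg hdb.le, relu_of_nonpos (by linarith [hb.1]),
        div_self (ne_of_gt hdb), zero_div, sub_zero]
    · intro hlt
      have hI1v : I₁ (fun j => xg (ι j)) = (d:ℝ) - 1 - b := by
        simp only [hI₁]
        rw [e1, if_neg (not_le.2 hlt), hsum2]
        ring
      have hI2v : I₂ (fun j => xg (ι j)) = (d:ℝ) - b := by
        simp only [hI₂]
        rw [e2, if_pos hlt, hsum2]
        ring
      rw [hf, hI1v, hI2v, relu_of_nonneg hdb.le, relu_of_nonpos (by linarith [hb.1]),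
        div_self (ne_of_gt hdb), zero_div, zero_sub]
  · -- part (ii): zero away from the grid
    intro x hx
    have hnear := fun j : Fin d => nearest hN hh hxg (x j)
    choose κ hκmem hκle using hnear
    obtain ⟨j₀, hj₀⟩ := hx κ hκmem
    have hS1 : ∀ j : Fin d, (∑ i ∈ Finset.Icc 1 N, hat h (xg i) (x j)) ≤ 1 := by
      intro j
      refine (hκle j).trans (max_le (by norm_num) ?_)
      have : 0 ≤ |x j - xg (κ j)| / h := div_nonneg (abs_nonneg _) hp.le
      linarith
    have hSj0 : (∑ i ∈ Finset.Icc 1 N, hat h (xg i) (x j₀)) ≤ 1 - ((d:ℝ) - b) := by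
      refine (hκle j₀).trans (max_le (by linarith [hb.1]) ?_)
      have h1 : (d:ℝ) - b ≤ |x j₀ - xg (κ j₀)| / h := (le_div_iff₀ hp).2 hj₀
      linarith
    have hfull : (∑ j : Fin d, ∑ i ∈ Finset.Icc 1 N, hat h (xg i) (x j)) ≤ b := by
      rw [← Finset.add_sum_erase Finset.univ
        (fun j => ∑ i ∈ Finset.Icc 1 N, hat h (xg i) (x j)) (Finset.mem_univ j₀)]
      have h2 : (∑ j ∈ Finset.univ.erase j₀, ∑ i ∈ Finset.Icc 1 N, hat h (xg i) (x j))
          ≤ ∑ _j ∈ Finset.univ.erase j₀, (1:ℝ) :=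
        Finset.sum_le_sum (fun j _ => hS1 j)
      rw [Finset.sum_const, nsmul_eq_mul, mul_one,
        Finset.card_erase_of_mem (Finset.mem_univ _), Finset.card_univ, Fintype.card_fin,
        hd1] at h2
      linarith
    have hsplit : (∑ i ∈ Finset.Icc 1 N, hat h (xg i) (x ⟨0, hd⟩))
        + (∑ j ∈ Finset.univ.filter (fun j : Fin d => j ≠ (⟨0, hd⟩ : Fin d)),
            ∑ i ∈ Finset.Icc 1 N, hat h (xg i) (x j))
        = ∑ j : Fin d, ∑ i ∈ Finset.Icc 1 N, hat h (xg i) (x j) := by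
      rw [Finset.filter_ne']
      exact Finset.add_sum_erase Finset.univ
        (fun j : Fin d => ∑ i ∈ Finset.Icc 1 N, hat h (xg i) (x j))
        (Finset.mem_univ (⟨0, hd⟩ : Fin d))
    have hfil : ∀ (P : ℕ → Prop) (_ : DecidablePred P),
        (∑ i ∈ (Finset.Icc 1 N).filter P, hat h (xg i) (x ⟨0, hd⟩))
          ≤ ∑ i ∈ Finset.Icc 1 N, hat h (xg i) (x ⟨0, hd⟩) := by
      intro P _
      exact Finset.sum_le_sum_of_subset_of_nonneg (Finset.filter_subset _ _)
        (fun i _ _ => hat_nonneg hp _ _)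
    have hI1le : I₁ x ≤ 0 := by
      rw [hI₁]
      have := hfil (fun i => (1:ℝ)/2 ≤ xg i) (by infer_instance)
      linarith
    have hI2le : I₂ x ≤ 0 := by
      rw [hI₂]
      have := hfil (fun i => xg i < (1:ℝ)/2) (by infer_instance)
      linarith
    rw [hf, relu_of_nonpos hI1le, relu_of_nonpos hI2le, zero_div, sub_zero]
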